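/- Under the assumptions (A1): !(∀y{η(z)} A[y]) ⊸ A[z]; (A2): !(∀y{y₁·y₂} A[y]) ⊸ !(∀y{y₁} A[y]) ⊗ !(∀y{y₂} A[y]); and (A3): !(∀y{f∘z} A[y]) ⊸ !(∀x{z} !(∀y{f x} A[y])), on an abstract formula construction ∀y{a} A with terms η, ·, ∘, the generic interpretation of the exponential |!A|ˣ_a := !(∀y{a} |A|ˣ_y) validates the contraction rule: if |Γ|ᵘ_γ, |!A|ˣ⁰_{a₀}, |!A|ˣ¹_{a₁} ⊢ |B|ᵇ_w is derivable, then |Γ|ᵘ_γ, |!A|ˣ_{a₀·a₁} ⊢ |B|ᵇ_w is derivable (after identifying x₀ and x₁ with x). -/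
import Mathlib


inductive Fml : Type where
  | atom : ℕ → Fml
  | zero : Fml
  | tensor : Fml → Fml → Fml
  | limp : Fml → Fml → Fml
  | wth : Fml → Fml → Fml
  | oplus : Fml → Fml → Fml
  | bang : Fml → Fml

inductive Deriv : List Fml → Fml → Prop where
  | id : ∀ (A : Fml), Deriv [A] A
  | exch : ∀ {Γ Δ : List (Fml)} {A : Fml}, List.Perm Γ Δ → Deriv Γ A → Deriv Δ A
  | cut : ∀ {Γ Δ : List (Fml)} {A B : Fml}, Deriv Γ A → Deriv (A :: Δ) B → Deriv (Γ ++ Δ) B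
  | zeroL : ∀ (Γ : List (Fml)) (A : Fml), Deriv (Fml.zero :: Γ) A
  | tensorR : ∀ {Γ Δ : List (Fml)} {A B : Fml}, Deriv Γ A → Deriv Δ B → Deriv (Γ ++ Δ) (Fml.tensor A B)
  | tensorL : ∀ {Γ : List (Fml)} {A B C : Fml}, Deriv (A :: B :: Γ) C → Deriv (Fml.tensor A B :: Γ) C
  | limpR : ∀ {Γ : List (Fml)} {A B : Fml}, Deriv (A :: Γ) B → Deriv Γ (Fml.limp A B)
  | limpL : ∀ {Γ Δ : List (Fml)} {A B C : Fml}, Deriv Γ A → Deriv (B :: Δ) C → Deriv (Fml.limp A B :: (Γ ++ Δ)) C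
  | withR : ∀ {Γ : List (Fml)} {A B : Fml}, Deriv Γ A → Deriv Γ B → Deriv Γ (Fml.wth A B)
  | withL₁ : ∀ {Γ : List (Fml)} {A B C : Fml}, Deriv (A :: Γ) C → Deriv (Fml.wth A B :: Γ) C
  | withL₂ : ∀ {Γ : List (Fml)} {A B C : Fml}, Deriv (B :: Γ) C → Deriv (Fml.wth A B :: Γ) C
  | oplusR₁ : ∀ {Γ : List (Fml)} {A B : Fml}, Deriv Γ A → Deriv Γ (Fml.oplus A B)
  | oplusR₂ : ∀ {Γ : List (Fml)} {A B : Fml}, Deriv Γ B → Deriv Γ (Fml.oplus A B)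
  | oplusL : ∀ {Γ : List (Fml)} {A B C : Fml}, Deriv (A :: Γ) C → Deriv (B :: Γ) C → Deriv (Fml.oplus A B :: Γ) C
  | contr : ∀ {Γ : List (Fml)} {A B : Fml}, Deriv (Fml.bang A :: Fml.bang A :: Γ) B → Deriv (Fml.bang A :: Γ) B
  | weak : ∀ {Γ : List (Fml)} {A B : Fml}, Deriv Γ B → Deriv (Fml.bang A :: Γ) B
  | bangR : ∀ {Γ : List (Fml)} {A : Fml}, Deriv (Γ.map Fml.bang) A → Deriv (Γ.map Fml.bang) (Fml.bang A)
  | bangL : ∀ {Γ : List (Fml)} {A B : Fml}, Deriv (A :: Γ) B → Deriv (Fml.bang A :: Γ) B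

/-- Linear bi-implication: (A ⊸ B) & (B ⊸ A). -/
def biimp (A B : Fml) : Fml := Fml.wth (Fml.limp A B) (Fml.limp B A)

/-- under conditions (A1)-(A3) on the abstract construction ∀y{a}A
(with terms η, ·, ∘), the generic interpretation |!A|ˣ_a := !(∀y{a}|A|ˣ_y) validates
contraction: from |Γ|, |!A|ˣ_{a₀}, |!A|ˣ_{a₁} ⊢ |B| derive |Γ|, |!A|ˣ_{a₀·a₁} ⊢ |B|. -/
theorem stmt14
    (Y T X TX : Type)
    (Box : (Y → Fml) → T → Fml)          -- ∀y{a} A  (challenges of type Y, indices of type T)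
    (BoxX : (X → Fml) → TX → Fml)        -- ∀x{z} A  (for the composition condition A3)
    (η : Y → T) (un : T → T → T) (comp : (X → T) → TX → T)
    (hA1 : ∀ (A : Y → Fml) (z : Y),
        Deriv [] (Fml.limp (Fml.bang (Box A (η z))) (A z)))
    (hA2 : ∀ (A : Y → Fml) (a₀ a₁ : T),
        Deriv [] (Fml.limp (Fml.bang (Box A (un a₀ a₁)))
                   (Fml.tensor (Fml.bang (Box A a₀)) (Fml.bang (Box A a₁)))))
    (hA3 : ∀ (A : Y → Fml) (f : X → T) (z : TX),
        Deriv [] (Fml.limp (Fml.bang (Box A (comp f z)))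
                   (Fml.bang (BoxX (fun x => Fml.bang (Box A (f x))) z))))
    (A : Y → Fml) (Γ : List Fml) (B : Fml) (a₀ a₁ : T)
    (hprem : Deriv (Fml.bang (Box A a₀) :: Fml.bang (Box A a₁) :: Γ) B) :
    Deriv (Fml.bang (Box A (un a₀ a₁)) :: Γ) B := by
  set P := Fml.bang (Box A (un a₀ a₁))
  set Q := Fml.tensor (Fml.bang (Box A a₀)) (Fml.bang (Box A a₁))
  have h1 : Deriv [P] Q := by
    have h2 : Deriv (Fml.limp P Q :: ([P] ++ [])) Q :=
      Deriv.limpL (Deriv.id P) (Deriv.id Q)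
    exact Deriv.cut (hA2 A a₀ a₁) h2
  have h3 : Deriv (Q :: Γ) B := Deriv.tensorL hprem
  exact Deriv.cut h1 h3
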